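/- Let G be a tournament of size n ≡ 3 (mod 4) with Seidel matrix S. Then G is doubly regular if and only if S has exactly three distinct eigenvalues √n, 0, -√n and S·𝟏 = 0 (equivalently, the eigenvalue 0 has all-ones eigenvector and the main angles of ±√n are zero). -/

import Mathlib

open Matrix Polynomial

noncomputable section

def IsTournament {n : ℕ} (A : Matrix (Fin n) (Fin n) ℝ) : Prop :=
  (∀ i j, A i j = 0 ∨ A i j = 1) ∧ (∀ i, A i i = 0) ∧
    A + Aᵀ = (Matrix.of fun _ _ => (1:ℝ)) - 1

def Seidel {n : ℕ} (A : Matrix (Fin n) (Fin n) ℝ) : Matrix (Fin n) (Fin n) ℂ :=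
  Complex.I • ((A - Aᵀ).map Complex.ofReal)

def IsDoublyRegular {n : ℕ} (A : Matrix (Fin n) (Fin n) ℝ) : Prop :=
  A.mulVec (fun _ => 1) = (fun _ => ((n : ℝ) - 1) / 2) ∧
  A * Aᵀ = (((n : ℝ) + 1) / 4) • 1 + (((n : ℝ) - 3) / 4) • Matrix.of fun _ _ => 1

/-!
Write `M = A - Aᵀ`, so that `S = i M` and `S² = -M²`. For a tournament `Aᵀ = J - I - A`, which
gives `M² = I + (n - 2) J + 2 (AJ - JA) - 4 AAᵀ`; hence `A` is doubly regular iff `M 𝟏 = 0` and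
`S² = nI - J`.

If `S 𝟏 = 0` then `SJ = 0`, so `S² = nI - J` gives `S³ = nS` and the spectrum lies in
`{√n, 0, -√n}`. Here `0` is attained by `𝟏`, and `±√n` are attained because otherwise
`S² ± √n S = 0`, contradicting `trace S = 0` and `trace S² = n(n - 1) ≠ 0`. Conversely, the
functional calculus of the Hermitian matrix `S` turns the spectrum `{√n, 0, -√n}` into `S³ = nS`;
then `X = nI - S² - J` is Hermitian with `X² = nX` and `trace X = 0`, so `trace (X Xᴴ) = 0` and
`X = 0`.
-/

local notation "𝟏" => fun _ => 1
local notation "J" => Matrix.of fun _ _ => 1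

namespace Matrix

variable {ι R : Type*}

theorem conjTranspose_ones [NonAssocSemiring R] [StarRing R] : (J : Matrix ι ι R)ᴴ = J := by
  ext
  simp

variable [Fintype ι]

theorem mul_ones_eq_smul [NonAssocSemiring R] {M : Matrix ι ι R} {c : R}
    (h : M *ᵥ 𝟏 = fun _ => c) : M * J = c • J := by
  ext i j
  simpa [mul_apply, mulVec, dotProduct] using congr_fun h i

theorem ones_mul_eq_smul [CommSemiring R] {M : Matrix ι ι R} {c : R}
    (h : Mᵀ *ᵥ 𝟏 = fun _ => c) : J * M = c • J := by
  have := congrArg transpose (mul_ones_eq_smul h)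
  rwa [transpose_mul, transpose_transpose, transpose_smul] at this

theorem ones_mul_ones [NonAssocSemiring R] :
    (J : Matrix ι ι R) * J = (Fintype.card ι : R) • J := by
  ext i j
  simp [mul_apply]

theorem trace_ones [NonAssocSemiring R] : trace (J : Matrix ι ι R) = Fintype.card ι := by
  simp [trace]

end Matrix

namespace IsTournament

variable {n : ℕ} {A : Matrix (Fin n) (Fin n) ℝ}

theorem transpose_eq (hA : IsTournament A) : Aᵀ = J - 1 - A := by
  rw [← hA.2.2]
  abel

theorem mulVec_ones_add_transpose_mulVec_ones (hA : IsTournament A) :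
    A *ᵥ 𝟏 + Aᵀ *ᵥ 𝟏 = fun _ => (n : ℝ) - 1 := by
  rw [← add_mulVec, hA.2.2]
  ext i
  simp [mulVec, dotProduct, one_apply]

theorem sub_transpose_mulVec_ones_eq_zero_iff (hA : IsTournament A) :
    (A - Aᵀ) *ᵥ 𝟏 = 0 ↔ A *ᵥ 𝟏 = fun _ => ((n : ℝ) - 1) / 2 := by
  simp only [sub_mulVec, funext_iff, Pi.sub_apply, Pi.zero_apply]
  refine forall_congr' fun i => ?_
  have hi := congr_fun hA.mulVec_ones_add_transpose_mulVec_ones i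
  simp only [Pi.add_apply] at hi
  constructor <;> intro <;> linarith

theorem sub_transpose_sq (hA : IsTournament A) :
    (A - Aᵀ) ^ 2 = 1 + ((n : ℝ) - 2) • J + 2 • (A * J - J * A) - 4 • (A * Aᵀ) := by
  have hJJ : (J : Matrix (Fin n) (Fin n) ℝ) * J = (n : ℝ) • J := by
    simpa using ones_mul_ones (ι := Fin n) (R := ℝ)
  rw [hA.transpose_eq]
  linear_combination (norm := skip) hJJ
  noncomm_ring
  module

theorem isDoublyRegular_iff (hA : IsTournament A) :
    IsDoublyRegular A ↔ (A - Aᵀ) *ᵥ 𝟏 = 0 ∧ (A - Aᵀ) ^ 2 = J - (n : ℝ) • 1 := by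
  rw [IsDoublyRegular, hA.sub_transpose_mulVec_ones_eq_zero_iff]
  refine and_congr_right fun hreg => ?_
  have hregT : Aᵀ *ᵥ 𝟏 = fun _ => ((n : ℝ) - 1) / 2 := by
    ext i
    have hi := congr_fun hA.mulVec_ones_add_transpose_mulVec_ones i
    simp only [Pi.add_apply, hreg] at hi
    linarith
  rw [hA.sub_transpose_sq, mul_ones_eq_smul hreg, ones_mul_eq_smul hregT, sub_self, smul_zero,
    add_zero]
  constructor <;> intro h
  · rw [h]
    module
  · linear_combination (norm := module) (-1 / 4 : ℝ) • h

theorem sub_transpose_apply_sq (hA : IsTournament A) (i j : Fin n) :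
    (A i j - A j i) ^ 2 = 1 - (1 : Matrix (Fin n) (Fin n) ℝ) i j := by
  by_cases h : i = j
  · simp [h, one_apply]
  have hsum := congr_fun₂ hA.2.2 i j
  simp only [Matrix.add_apply, transpose_apply, Matrix.sub_apply, of_apply, one_apply_ne h]
    at hsum ⊢
  rw [show A j i = 1 - A i j by linarith]
  rcases hA.1 i j with h1 | h1 <;> rw [h1] <;> norm_num

theorem trace_sub_transpose_sq (hA : IsTournament A) :
    trace ((A - Aᵀ) ^ 2) = -((n : ℝ) * (n - 1)) := by
  calc trace ((A - Aᵀ) ^ 2) = -∑ i, ∑ j, (A i j - A j i) ^ 2 := by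
        simp only [sq, trace, diag, mul_apply, Matrix.sub_apply, transpose_apply,
          ← Finset.sum_neg_distrib]
        congr! 2 with i _ j
        ring
    _ = -((n : ℝ) * (n - 1)) := by
        simp only [hA.sub_transpose_apply_sq, one_apply, Finset.sum_sub_distrib,
          Finset.sum_const, Finset.card_univ, Fintype.card_fin, nsmul_eq_mul, mul_one,
          Finset.sum_ite_eq, Finset.mem_univ, ↓reduceIte]
        ring

end IsTournament

section Seidel

variable {n : ℕ} (A : Matrix (Fin n) (Fin n) ℝ)

theorem isHermitian_seidel : (Seidel A).IsHermitian := by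
  ext i j
  simp only [Seidel, conjTranspose_apply, Matrix.smul_apply, map_apply, Matrix.sub_apply,
    transpose_apply, Complex.ofReal_sub, smul_eq_mul, star_mul', RCLike.star_def, Complex.conj_I,
    star_sub, Complex.conj_ofReal]
  ring

theorem trace_seidel : trace (Seidel A) = 0 := by
  simp [Seidel, trace]

theorem seidel_sq : Seidel A ^ 2 = -Complex.ofRealHom.mapMatrix ((A - Aᵀ) ^ 2) := by
  change (Complex.I • Complex.ofRealHom.mapMatrix (A - Aᵀ)) ^ 2 = _
  rw [_root_.smul_pow, map_pow, Complex.I_sq, neg_one_smul]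

theorem seidel_mulVec_ones_eq_zero_iff : Seidel A *ᵥ 𝟏 = 0 ↔ (A - Aᵀ) *ᵥ 𝟏 = 0 := by
  simp only [funext_iff, Pi.zero_apply]
  refine forall_congr' fun i => ?_
  simp only [mulVec, dotProduct, Seidel, Matrix.smul_apply, map_apply, Matrix.sub_apply,
    transpose_apply, Complex.ofReal_sub, smul_eq_mul, mul_one, ← Finset.mul_sum,
    Finset.sum_sub_distrib, mul_eq_zero, Complex.I_ne_zero, false_or]
  norm_cast

theorem seidel_sq_eq_iff :
    Seidel A ^ 2 = (n : ℂ) • 1 - J ↔ (A - Aᵀ) ^ 2 = J - (n : ℝ) • 1 := by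
  have hJ : Complex.ofRealHom.mapMatrix (J - (n : ℝ) • 1 : Matrix (Fin n) (Fin n) ℝ) =
      J - (n : ℂ) • 1 := by
    ext i j
    by_cases h : i = j <;> simp [h, one_apply]
  rw [seidel_sq, neg_eq_iff_eq_neg, neg_sub, ← hJ, RingHom.mapMatrix_apply,
    RingHom.mapMatrix_apply, (Matrix.map_injective Complex.ofRealHom.injective).eq_iff]

end Seidel

theorem IsTournament.trace_seidel_sq {n : ℕ} {A : Matrix (Fin n) (Fin n) ℝ}
    (hA : IsTournament A) : trace (Seidel A ^ 2) = (n * (n - 1) : ℂ) := by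
  rw [seidel_sq, trace_neg, RingHom.mapMatrix_apply, ← AddMonoidHom.map_trace,
    hA.trace_sub_transpose_sq]
  simp

theorem IsSelfAdjoint.aeval_eq_zero_of_eval_eq_zero {A : Type*} [Ring A] [StarRing A]
    [TopologicalSpace A] [Algebra ℝ A] [ContinuousFunctionalCalculus ℝ A IsSelfAdjoint]
    {a : A} (ha : IsSelfAdjoint a) {p : ℝ[X]} (hp : ∀ x ∈ spectrum ℝ a, p.eval x = 0) :
    aeval a p = 0 := by
  rw [← cfc_polynomial p a, cfc_congr hp, cfc_const_zero]

theorem spectrum_subset_of_pow_three_eq {𝕜 A : Type*} [Field 𝕜] [Ring A] [Algebra 𝕜 A]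
    {a : A} {s : 𝕜} (ha : a ^ 3 = s ^ 2 • a) : spectrum 𝕜 a ⊆ {s, 0, -s} := by
  cases subsingleton_or_nontrivial A
  · simp
  intro μ hμ
  have hroot := spectrum.subset_polynomial_aeval a (X ^ 3 - C (s ^ 2) * X) ⟨μ, hμ, rfl⟩
  simp only [map_sub, map_mul, aeval_X_pow, aeval_C, aeval_X, ha, Algebra.smul_def, sub_self,
    spectrum.zero_eq, eval_sub, eval_pow, eval_X, eval_mul, eval_C, Set.mem_singleton_iff]
    at hroot
  have hfactor : μ * (μ - s) * (μ + s) = 0 := by linear_combination hroot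
  simp only [Set.mem_insert_iff, Set.mem_singleton_iff]
  rcases mul_eq_zero.mp hfactor with h | h
  · rcases mul_eq_zero.mp h with h | h
    · exact .inr (.inl h)
    · exact .inl (sub_eq_zero.mp h)
  · exact .inr (.inr (eq_neg_of_add_eq_zero_left h))

theorem Matrix.mem_spectrum_of_pow_three_eq {𝕜 ι : Type*} [Field 𝕜] [Fintype ι] [DecidableEq ι]
    {S : Matrix ι ι 𝕜} {s : 𝕜} (hS : S ^ 3 = s ^ 2 • S) (htr : trace S = 0)
    (htr2 : trace (S ^ 2) ≠ 0) : s ∈ spectrum 𝕜 S := by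
  rw [spectrum.mem_iff, Algebra.algebraMap_eq_smul_one]
  intro hunit
  have hprod : (S ^ 2 + s • S) * (s • 1 - S) = s ^ 2 • S - S ^ 3 := by
    simp only [add_mul, mul_sub, smul_mul_assoc, mul_smul_comm, mul_one, smul_add, smul_smul,
      pow_succ, pow_zero, one_mul]
    abel
  rw [hS, sub_self] at hprod
  have h0 : S ^ 2 + s • S = 0 := hunit.mul_left_eq_zero.mp hprod
  apply htr2
  rw [eq_neg_of_add_eq_zero_left h0, trace_neg, trace_smul, htr, smul_zero, neg_zero]

theorem Matrix.IsHermitian.pow_three_eq_of_spectrum_subset {𝕜 ι : Type*} [RCLike 𝕜]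
    [Fintype ι] [DecidableEq ι] {S : Matrix ι ι 𝕜} (hS : S.IsHermitian) {s : ℝ}
    (h : spectrum 𝕜 S ⊆ {(s : 𝕜), 0, -(s : 𝕜)}) : S ^ 3 = s ^ 2 • S := by
  have hp : ∀ x ∈ spectrum ℝ S, (X ^ 3 - C (s ^ 2) * X : ℝ[X]).eval x = 0 := by
    intro x hx
    rw [← spectrum.preimage_algebraMap 𝕜] at hx
    have hx' := h hx
    simp only [Set.mem_insert_iff, Set.mem_singleton_iff, RCLike.algebraMap_eq_ofReal,
      ← RCLike.ofReal_neg, RCLike.ofReal_inj, RCLike.ofReal_eq_zero] at hx'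
    rcases hx' with rfl | rfl | rfl <;>
      simp only [map_pow, eval_sub, eval_pow, eval_X, eval_mul, eval_C] <;> ring
  simpa [sub_eq_zero, Algebra.smul_def] using hS.isSelfAdjoint.aeval_eq_zero_of_eval_eq_zero hp

open scoped ComplexOrder in
theorem Matrix.IsHermitian.sq_eq_of_pow_three_eq {𝕜 : Type*} [RCLike 𝕜] {n : ℕ}
    {S : Matrix (Fin n) (Fin n) 𝕜} (hS : S.IsHermitian) (h3 : S ^ 3 = (n : 𝕜) • S)
    (h1 : S *ᵥ 𝟏 = 0) (htr : trace (S ^ 2) = (n * (n - 1) : 𝕜)) :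
    S ^ 2 = (n : 𝕜) • 1 - J := by
  have hSJ : S * J = 0 := by simpa using mul_ones_eq_smul (c := 0) h1
  have hJS : J * S = 0 := by
    simpa [conjTranspose_mul, hS.eq, conjTranspose_ones] using congrArg (·ᴴ) hSJ
  have hJJ : (J : Matrix (Fin n) (Fin n) 𝕜) * J = (n : 𝕜) • J := by
    simpa using ones_mul_ones (ι := Fin n) (R := 𝕜)
  have hS4 : S ^ 2 * S ^ 2 = (n : 𝕜) • S ^ 2 := by
    rw [← pow_add, pow_succ, h3, smul_mul_assoc, ← sq]
  have hS2J : S ^ 2 * J = 0 := by rw [sq, mul_assoc, hSJ, mul_zero]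
  have hJS2 : J * S ^ 2 = 0 := by rw [sq, ← mul_assoc, hJS, zero_mul]
  set X : Matrix (Fin n) (Fin n) 𝕜 := (n : 𝕜) • 1 - S ^ 2 - J with hX
  have hXH : Xᴴ = X := by
    simp [hX, conjTranspose_sub, (hS.pow 2).eq, conjTranspose_ones]
  have hXX : X * X = (n : 𝕜) • X := by
    rw [hX]
    linear_combination (norm := noncomm_ring) hS4 + hS2J + hJS2 + hJJ
  have htrX : trace X = 0 := by
    simp only [hX, trace_sub, trace_smul, trace_one, Fintype.card_fin, smul_eq_mul, htr,
      trace_ones]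
    ring
  have hX0 : X = 0 := trace_mul_conjTranspose_self_eq_zero_iff.mp <| by
    rw [hXH, hXX, trace_smul, htrX, smul_zero]
  rw [hX] at hX0
  linear_combination (norm := module) -hX0

theorem Matrix.IsHermitian.sq_eq_iff_spectrum_eq {n : ℕ} (hn : 2 ≤ n)
    {S : Matrix (Fin n) (Fin n) ℂ} (hS : S.IsHermitian) (h1 : S *ᵥ 𝟏 = 0) (htr : trace S = 0)
    (htr2 : trace (S ^ 2) = (n * (n - 1) : ℂ)) :
    S ^ 2 = (n : ℂ) • 1 - J ↔ spectrum ℂ S = {(Real.sqrt n : ℂ), 0, -(Real.sqrt n : ℂ)} := by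
  have hs : (Real.sqrt n : ℂ) ^ 2 = n := by
    rw [← Complex.ofReal_pow, Real.sq_sqrt n.cast_nonneg, Complex.ofReal_natCast]
  constructor
  · intro h2
    have h3 : S ^ 3 = (Real.sqrt n : ℂ) ^ 2 • S := by
      rw [hs, pow_succ', h2, mul_sub, mul_smul_comm, mul_one, mul_ones_eq_smul (c := 0) h1,
        zero_smul, sub_zero]
    have htr2' : trace (S ^ 2) ≠ 0 := by
      rw [htr2]
      exact mul_ne_zero (Nat.cast_ne_zero.mpr (by omega)) (sub_ne_zero.mpr (by norm_cast; omega))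
    have h0 : (0 : ℂ) ∈ spectrum ℂ S := (spectrum.zero_mem_iff ℂ).mpr fun hu =>
      one_ne_zero (congr_fun (mulVec_injective_iff_isUnit.mpr hu (h1.trans (mulVec_zero S).symm))
        ⟨0, by omega⟩)
    refine (spectrum_subset_of_pow_three_eq h3).antisymm ?_
    simp only [Set.insert_subset_iff, Set.singleton_subset_iff]
    exact ⟨mem_spectrum_of_pow_three_eq h3 htr htr2', h0,
      mem_spectrum_of_pow_three_eq (by rwa [neg_sq]) htr htr2'⟩
  · intro hσ
    have h3 := hS.pow_three_eq_of_spectrum_subset hσ.subset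
    rw [Real.sq_sqrt n.cast_nonneg, Nat.cast_smul_eq_nsmul, ← Nat.cast_smul_eq_nsmul ℂ] at h3
    exact hS.sq_eq_of_pow_three_eq h3 h1 htr2

theorem doubly_regular_iff_seidel_spectrum {n : ℕ} (hmod : n % 4 = 3)
    (A : Matrix (Fin n) (Fin n) ℝ) (hA : IsTournament A) :
    IsDoublyRegular A ↔
      (spectrum ℂ (Seidel A) = {(Real.sqrt n : ℂ), 0, -(Real.sqrt n : ℂ)} ∧
        (Seidel A).mulVec (fun _ => 1) = 0) := by
  rw [hA.isDoublyRegular_iff, ← seidel_mulVec_ones_eq_zero_iff, ← seidel_sq_eq_iff, and_comm]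
  exact and_congr_left fun h1 => (isHermitian_seidel A).sq_eq_iff_spectrum_eq (by omega) h1
    (trace_seidel A) hA.trace_seidel_sq
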